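/- Let 𝒢 be a family of connected non-trivial graphs on a common vertex set V and let ℋ be a family of non-trivial graphs on a common vertex set V'. If there exists a simultaneous adjacency basis of ℋ which is also a simultaneous dominating set of ℋ, and for every simultaneous adjacency basis B of ℋ there exist H ∈ ℋ and v ∈ V'∖B such that B ⊆ N_H(v), then Sd_A(𝒢⊙ℋ) = |V| · Sd_A(ℋ) + Sγ(𝒢). -/

import Mathlib

open SimpleGraph

/-- `S` is a metric generator for `G`: every pair of distinct vertices is
distinguished by some element of `S` via the shortest-path distance. -/
def IsMetricGen {V : Type*} (G : SimpleGraph V) (S : Set V) : Prop :=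
  ∀ u v : V, u ≠ v → ∃ s ∈ S, G.dist s u ≠ G.dist s v

/-- `S` is an adjacency generator for `G`. -/
def IsAdjGen {V : Type*} (G : SimpleGraph V) (S : Set V) : Prop :=
  ∀ x y : V, x ∉ S → y ∉ S → x ≠ y → ∃ s ∈ S, Xor' (G.Adj s x) (G.Adj s y)

/-- `S` is a simultaneous metric generator for the family `𝒢`. -/
def IsSimMetricGen {V : Type*} (𝒢 : Set (SimpleGraph V)) (S : Set V) : Prop :=
  ∀ G ∈ 𝒢, IsMetricGen G S

/-- `S` is a simultaneous adjacency generator for the family `ℋ`. -/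
def IsSimAdjGen {V : Type*} (ℋ : Set (SimpleGraph V)) (S : Set V) : Prop :=
  ∀ H ∈ ℋ, IsAdjGen H S

/-- The simultaneous metric dimension of a family of graphs. -/
noncomputable def Sd {V : Type*} (𝒢 : Set (SimpleGraph V)) : ℕ :=
  sInf {n | ∃ S : Set V, S.ncard = n ∧ IsSimMetricGen 𝒢 S}

/-- The simultaneous adjacency dimension of a family of graphs. -/
noncomputable def SdA {V : Type*} (ℋ : Set (SimpleGraph V)) : ℕ :=
  sInf {n | ∃ S : Set V, S.ncard = n ∧ IsSimAdjGen ℋ S}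

/-- The adjacency dimension of a graph. -/
noncomputable def adjDim {V : Type*} (G : SimpleGraph V) : ℕ := SdA {G}

/-- `B` is an adjacency basis of `G`. -/
def IsAdjBasis {V : Type*} (G : SimpleGraph V) (B : Set V) : Prop :=
  IsAdjGen G B ∧ B.ncard = adjDim G

/-- `B` is a simultaneous adjacency basis of the family `ℋ`. -/
def IsSimAdjBasis {V : Type*} (ℋ : Set (SimpleGraph V)) (B : Set V) : Prop :=
  IsSimAdjGen ℋ B ∧ B.ncard = SdA ℋ

/-- `D` is a dominating set of `G`. -/
def IsDomSet {V : Type*} (G : SimpleGraph V) (D : Set V) : Prop :=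
  ∀ v ∉ D, ∃ u ∈ D, G.Adj u v

/-- `D` is a simultaneous dominating set of the family `𝒢`. -/
def IsSimDomSet {V : Type*} (𝒢 : Set (SimpleGraph V)) (D : Set V) : Prop :=
  ∀ G ∈ 𝒢, IsDomSet G D

/-- The simultaneous domination number of a family of graphs. -/
noncomputable def Sgamma {V : Type*} (𝒢 : Set (SimpleGraph V)) : ℕ :=
  sInf {n | ∃ D : Set V, D.ncard = n ∧ IsSimDomSet 𝒢 D}

/-- The domination number of a graph. -/
noncomputable def domNum {V : Type*} (G : SimpleGraph V) : ℕ := Sgamma {G}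

/-- `γ'(G) = min over vertices `v` of `γ(G - v)`. -/
noncomputable def gammaPrime {V : Type*} (G : SimpleGraph V) : ℕ :=
  sInf {n | ∃ v : V, n = domNum (G.induce {v}ᶜ)}

/-- The corona product `G ⊙ H`: one copy of `G` together with a copy of `H`
for each vertex `i` of `G`, joining `i` to every vertex of its copy. -/
def corona {V V' : Type*} (G : SimpleGraph V) (H : SimpleGraph V') :
    SimpleGraph (V ⊕ V × V') where
  Adj x y :=
    match x, y with
    | Sum.inl i, Sum.inl j => G.Adj i j
    | Sum.inl i, Sum.inr p => i = p.1
    | Sum.inr p, Sum.inl j => p.1 = j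
    | Sum.inr p, Sum.inr q => p.1 = q.1 ∧ H.Adj p.2 q.2
  symm := ⟨by
    rintro (i | p) (j | q) h
    · exact G.adj_symm h
    · exact h.symm
    · exact h.symm
    · exact ⟨h.1.symm, H.adj_symm h.2⟩⟩
  loopless := ⟨by
    rintro (i | p) h
    · exact G.loopless.irrefl i h
    · exact H.loopless.irrefl p.2 h.2⟩

/-- The family `{G ⊙ H : G ∈ 𝒢, H ∈ ℋ}` of corona products. -/
def coronaFam {V V' : Type*} (𝒢 : Set (SimpleGraph V)) (ℋ : Set (SimpleGraph V')) :
    Set (SimpleGraph (V ⊕ V × V')) :=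
  {K | ∃ G ∈ 𝒢, ∃ H ∈ ℋ, K = corona G H}

/-- The join `G + H` of two (vertex-disjoint) graphs. -/
def joinG {V₁ V₂ : Type*} (G : SimpleGraph V₁) (H : SimpleGraph V₂) :
    SimpleGraph (V₁ ⊕ V₂) where
  Adj x y :=
    match x, y with
    | Sum.inl a, Sum.inl b => G.Adj a b
    | Sum.inl _, Sum.inr _ => True
    | Sum.inr _, Sum.inl _ => True
    | Sum.inr a, Sum.inr b => H.Adj a b
  symm := ⟨by
    rintro (a | a) (b | b) h
    · exact G.adj_symm h
    · trivial
    · trivial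
    · exact H.adj_symm h⟩
  loopless := ⟨by
    rintro (a | a) h
    · exact G.loopless.irrefl a h
    · exact H.loopless.irrefl a h⟩

/-- The family `{G + H : G ∈ 𝒢, H ∈ ℋ}` of joins. -/
def joinFam {V₁ V₂ : Type*} (𝒢 : Set (SimpleGraph V₁)) (ℋ : Set (SimpleGraph V₂)) :
    Set (SimpleGraph (V₁ ⊕ V₂)) :=
  {K | ∃ G ∈ 𝒢, ∃ H ∈ ℋ, K = joinG G H}

/-- The family `𝒢_B(G)`: all graphs `G'` such that, for some permutation `f` of the
vertex set fixing `B` pointwise, `N_{G'}(x) = f(N_G(x))` for every `x ∈ B`. -/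
def GBfam {V : Type*} (G : SimpleGraph V) (B : Set V) : Set (SimpleGraph V) :=
  {G' | ∃ f : Equiv.Perm V, (∀ x ∈ B, f x = x) ∧
    ∀ x ∈ B, G'.neighborSet x = f '' (G.neighborSet x)}

/-!
Upper bound: a simultaneous dominating set of `𝒢` together with, in every copy of `H`, a
simultaneous adjacency basis of `ℋ` that also dominates, is a simultaneous adjacency generator
of `𝒢 ⊙ ℋ`.

Lower bound: for a simultaneous adjacency generator `S` of `𝒢 ⊙ ℋ`, the trace of `S` on each
copy of `H` is a simultaneous adjacency generator of `ℋ`, so it has at least `SdA ℋ` elements.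
The vertices of `G` lying in `S` or carrying a strictly larger trace dominate every graph of `𝒢`,
and each vertex of the second kind pays for itself with its extra trace element.
-/

theorem Set.ncard_eq_ncard_preimage_inl_add_ncard_preimage_inr {α β : Type*}
    [Finite α] [Finite β] (s : Set (α ⊕ β)) :
    s.ncard = (Sum.inl ⁻¹' s).ncard + (Sum.inr ⁻¹' s).ncard := by
  conv_lhs => rw [← Set.image_preimage_inl_union_image_preimage_inr s]
  rw [Set.ncard_union_eq Set.disjoint_image_inl_image_inr,
    Set.ncard_image_of_injective _ Sum.inl_injective,
    Set.ncard_image_of_injective _ Sum.inr_injective]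

theorem Set.ncard_eq_sum_ncard_fiber {α β : Type*} [Fintype α] [Finite β] (s : Set (α × β)) :
    s.ncard = ∑ a, {b | (a, b) ∈ s}.ncard := by
  simp only [← Nat.card_coe_set_eq]
  rw [← Nat.card_sigma]
  exact Nat.card_congr
    { toFun := fun p => ⟨p.1.1, p.1.2, p.2⟩
      invFun := fun q => ⟨(q.1, q.2.1), q.2.2⟩
      left_inv := fun _ => rfl
      right_inv := fun _ => rfl }

theorem Fintype.card_mul_add_ncard_lt_le_sum {ι : Type*} [Fintype ι] (f : ι → ℕ) (m : ℕ)
    (h : ∀ i, m ≤ f i) : Fintype.card ι * m + {i | m < f i}.ncard ≤ ∑ i, f i := by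
  classical
  have hlt : {i | m < f i}.ncard = ∑ i, if m < f i then 1 else 0 := by
    rw [Finset.sum_boole, Set.ncard_eq_toFinset_card', Set.toFinset_ofPred, Nat.cast_id]
  rw [hlt, ← smul_eq_mul, ← Finset.card_univ, ← Finset.sum_const, ← Finset.sum_add_distrib]
  refine Finset.sum_le_sum fun i _ => ?_
  split_ifs with hi
  · exact hi
  · exact (add_zero m).trans_le (h i)

section Dimensions

variable {V : Type*}

theorem SdA_le {ℋ : Set (SimpleGraph V)} {S : Set V} (hS : IsSimAdjGen ℋ S) :
    SdA ℋ ≤ S.ncard :=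
  Nat.sInf_le ⟨S, rfl, hS⟩

theorem Sgamma_le {𝒢 : Set (SimpleGraph V)} {D : Set V} (hD : IsSimDomSet 𝒢 D) :
    Sgamma 𝒢 ≤ D.ncard :=
  Nat.sInf_le ⟨D, rfl, hD⟩

theorem exists_isSimAdjGen_ncard_eq_SdA (ℋ : Set (SimpleGraph V)) :
    ∃ S : Set V, IsSimAdjGen ℋ S ∧ S.ncard = SdA ℋ := by
  obtain ⟨S, hcard, hS⟩ :=
    Nat.sInf_mem (s := {n | ∃ S : Set V, S.ncard = n ∧ IsSimAdjGen ℋ S})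
      ⟨_, Set.univ, rfl, fun _ _ x _ hx _ _ => absurd (Set.mem_univ x) hx⟩
  exact ⟨S, hS, hcard⟩

theorem exists_isSimDomSet_ncard_eq_Sgamma (𝒢 : Set (SimpleGraph V)) :
    ∃ D : Set V, IsSimDomSet 𝒢 D ∧ D.ncard = Sgamma 𝒢 := by
  obtain ⟨D, hcard, hD⟩ :=
    Nat.sInf_mem (s := {n | ∃ D : Set V, D.ncard = n ∧ IsSimDomSet 𝒢 D})
      ⟨_, Set.univ, rfl, fun _ _ v hv => absurd (Set.mem_univ v) hv⟩
  exact ⟨D, hD, hcard⟩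

end Dimensions

section Corona

variable {V V' : Type*} {G : SimpleGraph V} {H : SimpleGraph V'}

@[simp] theorem corona_adj_inl_inl {i j : V} :
    (corona G H).Adj (Sum.inl i) (Sum.inl j) ↔ G.Adj i j := Iff.rfl

@[simp] theorem corona_adj_inl_inr {i : V} {p : V × V'} :
    (corona G H).Adj (Sum.inl i) (Sum.inr p) ↔ i = p.1 := Iff.rfl

@[simp] theorem corona_adj_inr_inl {j : V} {p : V × V'} :
    (corona G H).Adj (Sum.inr p) (Sum.inl j) ↔ p.1 = j := Iff.rfl

@[simp] theorem corona_adj_inr_inr {p q : V × V'} :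
    (corona G H).Adj (Sum.inr p) (Sum.inr q) ↔ p.1 = q.1 ∧ H.Adj p.2 q.2 := Iff.rfl

def coronaFiber (S : Set (V ⊕ V × V')) (i : V) : Set V' := {u | Sum.inr (i, u) ∈ S}

def coronaSet (D : Set V) (B : Set V') : Set (V ⊕ V × V') := Sum.elim D (Prod.snd ⁻¹' B)

theorem ncard_eq_ncard_preimage_inl_add_sum_ncard_coronaFiber [Fintype V] [Finite V']
    (S : Set (V ⊕ V × V')) :
    S.ncard = (Sum.inl ⁻¹' S).ncard + ∑ i, (coronaFiber S i).ncard := by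
  rw [Set.ncard_eq_ncard_preimage_inl_add_ncard_preimage_inr, Set.ncard_eq_sum_ncard_fiber]
  rfl

theorem ncard_coronaSet [Fintype V] [Finite V'] (D : Set V) (B : Set V') :
    (coronaSet D B).ncard = D.ncard + Fintype.card V * B.ncard := by
  rw [ncard_eq_ncard_preimage_inl_add_sum_ncard_coronaFiber]
  change D.ncard + ∑ _i : V, B.ncard = _
  rw [Finset.sum_const, Finset.card_univ, smul_eq_mul]

theorem IsAdjGen.corona_coronaSet {D : Set V} {B : Set V'} (hD : IsDomSet G D)
    (hB : IsAdjGen H B) (hBdom : IsDomSet H B) (hBne : B.Nonempty) :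
    IsAdjGen (corona G H) (coronaSet D B) := by
  have mixed : ∀ (i k : V) (v : V'), i ∉ D → v ∉ B → ∃ s ∈ coronaSet D B,
      Xor ((corona G H).Adj s (Sum.inl i)) ((corona G H).Adj s (Sum.inr (k, v))) := by
    intro i k v hi hv
    by_cases hik : i = k
    · subst hik
      obtain ⟨d, hd, hdi⟩ := hD i hi
      exact ⟨Sum.inl d, hd, Or.inl ⟨hdi, G.ne_of_adj hdi⟩⟩
    · obtain ⟨s, hs, hsv⟩ := hBdom v hv
      exact ⟨Sum.inr (k, s), hs, Or.inr ⟨⟨rfl, hsv⟩, fun hki => hik hki.symm⟩⟩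
  rintro (i | ⟨i, u⟩) (k | ⟨k, v⟩) hx hy hxy
  · obtain ⟨b, hb⟩ := hBne
    exact ⟨Sum.inr (i, b), hb, Or.inl ⟨rfl, fun hik => hxy (congrArg Sum.inl hik)⟩⟩
  · exact mixed i k v hx hy
  · obtain ⟨s, hs, hxor⟩ := mixed k i u hy hx
    exact ⟨s, hs, hxor.symm⟩
  · by_cases hik : i = k
    · subst hik
      obtain ⟨s, hs, hxor⟩ := hB u v hx hy fun huv => hxy (by rw [huv])
      refine ⟨Sum.inr (i, s), hs, ?_⟩
      simpa only [corona_adj_inr_inr, true_and] using hxor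
    · obtain ⟨s, hs, hsu⟩ := hBdom u hx
      exact ⟨Sum.inr (i, s), hs, Or.inl ⟨⟨rfl, hsu⟩, fun h => hik h.1⟩⟩

theorem IsAdjGen.isAdjGen_coronaFiber {S : Set (V ⊕ V × V')} (hS : IsAdjGen (corona G H) S)
    (i : V) : IsAdjGen H (coronaFiber S i) := by
  intro x y hx hy hxy
  obtain ⟨_ | ⟨j, u⟩, hs, hxor⟩ :=
    hS (Sum.inr (i, x)) (Sum.inr (i, y)) hx hy (by simpa using hxy)
  · rcases hxor with ⟨h, h'⟩ | ⟨h, h'⟩ <;> exact absurd h h'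
  · simp only [corona_adj_inr_inr] at hxor
    obtain rfl : j = i := by
      rcases hxor with ⟨⟨hji, -⟩, -⟩ | ⟨⟨hji, -⟩, -⟩ <;> exact hji
    exact ⟨u, hs, by simpa only [true_and] using hxor⟩

/-- Both `i` and `(i, v)` are adjacent to every vertex of the fiber, so only a vertex of `G`
can tell them apart. -/
theorem IsAdjGen.exists_inl_mem_adj {S : Set (V ⊕ V × V')} (hS : IsAdjGen (corona G H) S)
    {i : V} {v : V'} (hi : Sum.inl i ∉ S) (hv : v ∉ coronaFiber S i)
    (hsub : coronaFiber S i ⊆ H.neighborSet v) : ∃ j, Sum.inl j ∈ S ∧ G.Adj j i := by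
  obtain ⟨j | ⟨j, u⟩, hs, hxor⟩ := hS (Sum.inl i) (Sum.inr (i, v)) hi hv Sum.inl_ne_inr
  · simp only [corona_adj_inl_inl, corona_adj_inl_inr] at hxor
    rcases hxor with ⟨hji, -⟩ | ⟨rfl, -⟩
    · exact ⟨j, hs, hji⟩
    · exact absurd hs hi
  · simp only [corona_adj_inr_inl, corona_adj_inr_inr] at hxor
    rcases hxor with ⟨rfl, hne⟩ | ⟨⟨rfl, -⟩, hne⟩
    · exact absurd ⟨rfl, H.adj_symm (hsub hs)⟩ hne
    · exact absurd rfl hne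

end Corona

section CoronaFamily

variable {V V' : Type*} {𝒢 : Set (SimpleGraph V)} {ℋ : Set (SimpleGraph V')}

theorem IsSimAdjGen.coronaFam_coronaSet {D : Set V} {B : Set V'} (hD : IsSimDomSet 𝒢 D)
    (hB : IsSimAdjGen ℋ B) (hBdom : IsSimDomSet ℋ B) (hBne : B.Nonempty) :
    IsSimAdjGen (coronaFam 𝒢 ℋ) (coronaSet D B) := by
  rintro _ ⟨G, hG, H, hH, rfl⟩
  exact (hB H hH).corona_coronaSet (hD G hG) (hBdom H hH) hBne

theorem IsSimAdjGen.isSimAdjGen_coronaFiber {S : Set (V ⊕ V × V')}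
    (hS : IsSimAdjGen (coronaFam 𝒢 ℋ) S) (h𝒢 : 𝒢.Nonempty) (i : V) :
    IsSimAdjGen ℋ (coronaFiber S i) := by
  obtain ⟨G, hG⟩ := h𝒢
  exact fun H hH => (hS _ ⟨G, hG, H, hH, rfl⟩).isAdjGen_coronaFiber i

/-- A vertex `i` outside the set has a fiber of size `SdA ℋ`, i.e. a simultaneous adjacency
basis of `ℋ`; `hall` puts it inside some `N_H(v)`, and telling `i` from `(i, v)` then needs a
neighbour of `i` in `S`. -/
theorem IsSimAdjGen.isSimDomSet_coronaFam {S : Set (V ⊕ V × V')}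
    (hall : ∀ B : Set V', IsSimAdjBasis ℋ B →
      ∃ H ∈ ℋ, ∃ v : V', v ∉ B ∧ B ⊆ H.neighborSet v)
    (hS : IsSimAdjGen (coronaFam 𝒢 ℋ) S) :
    IsSimDomSet 𝒢 (Sum.inl ⁻¹' S ∪ {i | SdA ℋ < (coronaFiber S i).ncard}) := by
  intro G hG i hi
  simp only [Set.mem_union, Set.mem_preimage, Set.mem_ofPred_eq, not_or, not_lt] at hi
  have hfiber := hS.isSimAdjGen_coronaFiber ⟨G, hG⟩ i
  obtain ⟨H, hH, v, hv, hsub⟩ := hall _ ⟨hfiber, hi.2.antisymm (SdA_le hfiber)⟩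
  obtain ⟨j, hj, hji⟩ := (hS _ ⟨G, hG, H, hH, rfl⟩).exists_inl_mem_adj hi.1 hv hsub
  exact ⟨j, Or.inl hj, hji⟩

end CoronaFamily

theorem statement_11_general {V V' : Type*} [Fintype V] [Fintype V']
    (𝒢 : Set (SimpleGraph V)) (h𝒢ne : 𝒢.Nonempty)
    (ℋ : Set (SimpleGraph V'))
    (hex : ∃ B : Set V', IsSimAdjBasis ℋ B ∧ IsSimDomSet ℋ B)
    (hall : ∀ B : Set V', IsSimAdjBasis ℋ B →
      ∃ H ∈ ℋ, ∃ v : V', v ∉ B ∧ B ⊆ H.neighborSet v) :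
    SdA (coronaFam 𝒢 ℋ) = Fintype.card V * SdA ℋ + Sgamma 𝒢 := by
  obtain ⟨B, hB, hBdom⟩ := hex
  apply le_antisymm
  · obtain ⟨D, hD, hDcard⟩ := exists_isSimDomSet_ncard_eq_Sgamma 𝒢
    obtain ⟨H, hH, v, hv, -⟩ := hall B hB
    obtain ⟨b, hb, -⟩ := hBdom H hH v hv
    calc SdA (coronaFam 𝒢 ℋ) ≤ (coronaSet D B).ncard :=
          SdA_le (hB.1.coronaFam_coronaSet hD hBdom ⟨b, hb⟩)
      _ = Fintype.card V * SdA ℋ + Sgamma 𝒢 := by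
          rw [ncard_coronaSet, hDcard, hB.2, add_comm]
  · obtain ⟨S, hS, hScard⟩ := exists_isSimAdjGen_ncard_eq_SdA (coronaFam 𝒢 ℋ)
    have hdom := Sgamma_le (hS.isSimDomSet_coronaFam hall)
    have hunion := Set.ncard_union_le (Sum.inl ⁻¹' S) {i | SdA ℋ < (coronaFiber S i).ncard}
    have hfibers := Fintype.card_mul_add_ncard_lt_le_sum (fun i => (coronaFiber S i).ncard)
      (SdA ℋ) fun i => SdA_le (hS.isSimAdjGen_coronaFiber h𝒢ne i)
    rw [← hScard, ncard_eq_ncard_preimage_inl_add_sum_ncard_coronaFiber S]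
    omega

theorem statement_11 {V V' : Type*} [Fintype V] [Fintype V'] [Nontrivial V] [Nontrivial V']
    (𝒢 : Set (SimpleGraph V)) (h𝒢ne : 𝒢.Nonempty) (h𝒢 : ∀ G ∈ 𝒢, G.Connected)
    (ℋ : Set (SimpleGraph V')) (hℋne : ℋ.Nonempty)
    (hex : ∃ B : Set V', IsSimAdjBasis ℋ B ∧ IsSimDomSet ℋ B)
    (hall : ∀ B : Set V', IsSimAdjBasis ℋ B →
      ∃ H ∈ ℋ, ∃ v : V', v ∉ B ∧ B ⊆ H.neighborSet v) :
    SdA (coronaFam 𝒢 ℋ) = Fintype.card V * SdA ℋ + Sgamma 𝒢 :=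
  statement_11_general 𝒢 h𝒢ne ℋ hex hall
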